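/- arXiv:2202.12366 — 3 statements merged into one kernel-verified Lean document; each statement's English description precedes it below -/
import Mathlib

section
/- Grade the ring A = Z/2[τ, e1, e2]/(e1² - e2τ) by setting deg(τ) = (0,1), deg(e1) = (1,1), deg(e2) = (2,1) in Z × Z. Then for every pair (a,b) with 0 ≤ a ≤ 2b, the homogeneous component A^{(a,b)} is a one-dimensional Z/2-vector space, and A^{(a,b)} = 0 whenever a > 2b or b < 0. -/
noncomputable section

/-- The field `ℤ/2`. -/
abbrev k2 : Type := ZMod 2

open MvPolynomial in
/-- The ideal `(e₁² - e₂τ)` of `ℤ/2[τ,e₁,e₂]`, with variables `0 = τ`, `1 = e₁`, `2 = e₂`. -/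
abbrev I8 : Ideal (MvPolynomial (Fin 3) k2) :=
  Ideal.span {X 1 ^ 2 - X 2 * X 0}

/-- The ring `A = ℤ/2[τ,e₁,e₂]/(e₁² - e₂τ)`. -/
abbrev A8 : Type := MvPolynomial (Fin 3) k2 ⧸ I8

/-- The class of `τ` in `A`. -/
def τ8 : A8 := Ideal.Quotient.mk I8 (MvPolynomial.X 0)

/-- The class of `e₁` in `A`. -/
def e18 : A8 := Ideal.Quotient.mk I8 (MvPolynomial.X 1)

/-- The class of `e₂` in `A`. -/
def e28 : A8 := Ideal.Quotient.mk I8 (MvPolynomial.X 2)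

open MvPolynomial in
/-- The bigraded component of `A` in bidegree `(a,b)`, spanned by the monomials
`τ^i e₁^j e₂^l` with `deg(τ) = (0,1)`, `deg(e₁) = (1,1)`, `deg(e₂) = (2,1)`. -/
def comp9 (a b : ℤ) : Submodule k2 A8 :=
  Submodule.span k2 {x : A8 | ∃ i j l : ℕ,
    (j : ℤ) + 2 * l = a ∧ (i : ℤ) + j + l = b ∧
    x = Ideal.Quotient.mk I8 (X 0 ^ i * X 1 ^ j * X 2 ^ l)}

/-!
The relation `e₁² = e₂τ` rewrites every monomial `τ^i e₁^j e₂^l` into the normal form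
`τ^(i + j/2) e₁^(j % 2) e₂^(l + j/2)`. In bidegree `(a, b)` the normal form is forced:
`e₁` occurs to the power `a % 2`, `e₂` to the power `a / 2` and `τ` to the remaining power
`b - a % 2 - a / 2`, which is `≥ 0` exactly when `a ≤ 2b`. So the component is spanned by a single
monomial, and that monomial is nonzero because evaluating all generators at `1` kills the relation.
-/

open MvPolynomial

theorem e18_sq : e18 ^ 2 = e28 * τ8 := by
  have h : Ideal.Quotient.mk I8 ((X 1 : MvPolynomial (Fin 3) k2) ^ 2) =
      Ideal.Quotient.mk I8 (X 2 * X 0) := by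
    rw [Ideal.Quotient.eq]
    exact Ideal.subset_span rfl
  simpa only [e18, e28, τ8, map_mul, map_pow] using h

theorem mk_X_pow_mul_X_pow_mul_X_pow (i j l : ℕ) :
    Ideal.Quotient.mk I8 (X 0 ^ i * X 1 ^ j * X 2 ^ l : MvPolynomial (Fin 3) k2) =
      τ8 ^ i * e18 ^ j * e28 ^ l := by
  simp only [τ8, e18, e28, map_mul, map_pow]

theorem τ8_pow_mul_e18_pow_mul_e28_pow_eq_normalForm (i j l : ℕ) :
    τ8 ^ i * e18 ^ j * e28 ^ l = τ8 ^ (i + j / 2) * e18 ^ (j % 2) * e28 ^ (l + j / 2) := by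
  have he1 : e18 ^ j = e18 ^ (j % 2) * (e28 * τ8) ^ (j / 2) := by
    rw [← e18_sq, ← pow_mul, ← pow_add, Nat.mod_add_div]
  rw [he1]
  ring

def augmentation : A8 →+* k2 :=
  Ideal.Quotient.lift I8 (eval fun _ => 1) fun p hp => by
    refine (Ideal.span_le.mpr ?_ : I8 ≤ RingHom.ker (eval fun _ => (1 : k2))) hp
    rintro q rfl
    simp [RingHom.mem_ker]

theorem augmentation_mk_X (n : Fin 3) : augmentation (Ideal.Quotient.mk I8 (X n)) = 1 :=
  (Ideal.Quotient.lift_mk _ _ _).trans (eval_X _)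

theorem τ8_pow_mul_e18_pow_mul_e28_pow_ne_zero (i j l : ℕ) : τ8 ^ i * e18 ^ j * e28 ^ l ≠ 0 := by
  intro h
  have h1 := congrArg augmentation h
  simp only [τ8, e18, e28, map_mul, map_pow, augmentation_mk_X, one_pow, mul_one,
    map_zero] at h1
  exact one_ne_zero h1

theorem comp9_eq_span_normalForm {a b : ℤ} (ha : 0 ≤ a) (hab : a ≤ 2 * b) :
    comp9 a b = k2 ∙ (τ8 ^ (b.toNat - a.toNat % 2 - a.toNat / 2) * e18 ^ (a.toNat % 2) *
      e28 ^ (a.toNat / 2)) := by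
  rw [comp9]
  congr 1
  ext x
  simp only [Set.mem_ofPred_eq, Set.mem_singleton_iff, mk_X_pow_mul_X_pow_mul_X_pow]
  constructor
  · rintro ⟨i, j, l, hdeg₁, hdeg₂, rfl⟩
    rw [τ8_pow_mul_e18_pow_mul_e28_pow_eq_normalForm]
    congr 3 <;> omega
  · rintro rfl
    exact ⟨_, _, _, by omega, by omega, rfl⟩

theorem comp9_eq_bot {a b : ℤ} (h : 2 * b < a ∨ b < 0) : comp9 a b = ⊥ := by
  rw [eq_bot_iff, comp9, Submodule.span_le]
  rintro x ⟨i, j, l, hdeg₁, hdeg₂, -⟩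
  omega

/-- the component `A^{(a,b)}` is one-dimensional over `ℤ/2` whenever
`0 ≤ a ≤ 2b`, and vanishes whenever `a > 2b` or `b < 0`. -/
theorem stmt9 (a b : ℤ) :
    (0 ≤ a → a ≤ 2 * b → Module.finrank k2 (comp9 a b) = 1) ∧
    (2 * b < a ∨ b < 0 → comp9 a b = ⊥) := by
  refine ⟨fun ha hab => ?_, comp9_eq_bot⟩
  rw [comp9_eq_span_normalForm ha hab]
  exact finrank_span_singleton (τ8_pow_mul_e18_pow_mul_e28_pow_ne_zero _ _ _)
end
end

section
/- Let S = Z/2[a,u][ξ, τσ, μ]/(ξμ - u²), graded by weights in Z × Z with wt(ξ) = (-1,1), wt(μ) = (1,-1), wt(τσ) = (0,1), wt(a) = wt(u) = (0,0). Then for every (b,q) ∈ Z × Z with b + q ≥ 0, the weight-(b,q) homogeneous component of S is a free Z/2[a,u]-module of rank 1, generated by μ^b τσ^{q+b} when b ≥ 0, and by ξ^{|b|} τσ^{q+b} when b < 0. Moreover the component is 0 when b + q < 0. -/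
noncomputable section

open MvPolynomial in
/-- The ideal `(ξμ - u²)` of `ℤ/2[a,u,ξ,τσ,μ]`, with variables
`0 = a`, `1 = u`, `2 = ξ`, `3 = τσ`, `4 = μ`. -/
abbrev I5 : Ideal (MvPolynomial (Fin 5) k2) :=
  Ideal.span {X 2 * X 4 - X 1 ^ 2}

/-- The ring `S = ℤ/2[a,u][ξ,τσ,μ]/(ξμ - u²)`. -/
abbrev S5 : Type := MvPolynomial (Fin 5) k2 ⧸ I5

/-- The quotient map onto `S`. -/
def mk5 : MvPolynomial (Fin 5) k2 →+* S5 := Ideal.Quotient.mk I5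

open MvPolynomial in
/-- The weight-`(b,q)` component of `S`, spanned by the monomials
`aⁱuʲξᵉτσᵗμᵐ` of weight `(m - e, t + e - m)`, i.e. with `wt(ξ) = (-1,1)`,
`wt(μ) = (1,-1)`, `wt(τσ) = (0,1)`, `wt(a) = wt(u) = (0,0)`. -/
def comp11 (b q : ℤ) : Submodule k2 S5 :=
  Submodule.span k2 {x : S5 | ∃ i j e t m : ℕ,
    (m : ℤ) - e = b ∧ (t : ℤ) + e - m = q ∧
    x = mk5 (X 0 ^ i * X 1 ^ j * X 2 ^ e * X 3 ^ t * X 4 ^ m)}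

open MvPolynomial in
/-- The generator `μ^b τσ^{q+b}` (for `b ≥ 0`) resp. `ξ^{|b|} τσ^{q+b}` (for `b < 0`)
of the weight-`(b,q)` component. -/
def g11 (b q : ℤ) : S5 :=
  if 0 ≤ b then mk5 (X 4 ^ b.toNat * X 3 ^ (q + b).toNat)
  else mk5 (X 2 ^ (-b).toNat * X 3 ^ (q + b).toNat)

/-- Multiplication of `ℤ/2[a,u]` into `S` against the generator `g11 b q`. -/
def F11 (b q : ℤ) : MvPolynomial (Fin 2) k2 → S5 :=
  fun p => mk5 (MvPolynomial.rename (Fin.castLE (by norm_num)) p) * g11 b q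


section Aux
open MvPolynomial

def phi : MvPolynomial (Fin 5) k2 →ₐ[k2] MvPolynomial (Fin 4) k2 :=
  aeval ![X 0, X 2 * X 3, X 2 ^ 2, X 1, X 3 ^ 2]

lemma phi_ker : I5 ≤ RingHom.ker phi.toRingHom := by
  rw [Ideal.span_le, Set.singleton_subset_iff]
  simp only [SetLike.mem_coe, RingHom.mem_ker, AlgHom.toRingHom_eq_coe, RingHom.coe_coe,
    map_sub, map_mul, map_pow]
  simp [phi]
  ring

def Phi : S5 →+* MvPolynomial (Fin 4) k2 :=
  Ideal.Quotient.lift I5 phi.toRingHom phi_ker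

lemma Phi_mk (p : MvPolynomial (Fin 5) k2) : Phi (mk5 p) = phi p := rfl

def ren : MvPolynomial (Fin 2) k2 →ₐ[k2] MvPolynomial (Fin 5) k2 :=
  rename (Fin.castLE (by norm_num))

def psi : MvPolynomial (Fin 4) k2 →ₐ[k2] MvPolynomial (Fin 2) k2 :=
  aeval ![X 0, 0, X 1, 1]

lemma psi_phi (p : MvPolynomial (Fin 2) k2) : psi (phi (ren p)) = p := by
  have h : (psi.comp (phi.comp ren)) = AlgHom.id k2 (MvPolynomial (Fin 2) k2) := by
    apply algHom_ext
    intro i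
    fin_cases i <;> simp [psi, phi, ren, Fin.castLE]
  exact DFunLike.congr_fun h p

lemma mk_rel : mk5 (X 2 * X 4) = mk5 (X 1 ^ 2) := by
  rw [mk5, Ideal.Quotient.mk_eq_mk_iff_sub_mem]
  exact Ideal.subset_span rfl

lemma red (e : ℕ) (P : MvPolynomial (Fin 5) k2) :
    mk5 ((X 2 * X 4) ^ e * P) = mk5 (X 1 ^ (2 * e) * P) := by
  rw [map_mul, map_mul, map_pow, mk_rel, ← map_pow, ← pow_mul]

def G11 (b q : ℤ) : MvPolynomial (Fin 5) k2 :=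
  if 0 ≤ b then X 4 ^ b.toNat * X 3 ^ (q + b).toNat
  else X 2 ^ (-b).toNat * X 3 ^ (q + b).toNat

lemma g11_eq (b q : ℤ) : g11 b q = mk5 (G11 b q) := by
  unfold g11 G11; split <;> rfl

lemma F11_eq (b q : ℤ) (p : MvPolynomial (Fin 2) k2) :
    F11 b q p = mk5 (ren p * G11 b q) := by
  rw [F11, g11_eq, map_mul]; rfl

lemma phi_G11_ne (b q : ℤ) : phi (G11 b q) ≠ 0 := by
  unfold G11
  split <;>
  · simp only [map_mul, map_pow, phi, aeval_X]
    refine mul_ne_zero (pow_ne_zero _ ?_) (pow_ne_zero _ ?_) <;> simp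

lemma F11_inj (b q : ℤ) : Function.Injective (F11 b q) := by
  intro p₁ p₂ h
  rw [F11_eq, F11_eq] at h
  have h2 : phi (ren p₁ * G11 b q) = phi (ren p₂ * G11 b q) := by
    have := congrArg Phi h; rwa [Phi_mk, Phi_mk] at this
  rw [map_mul, map_mul] at h2
  have h3 := mul_right_cancel₀ (phi_G11_ne b q) h2
  have h4 := congrArg psi h3
  rwa [psi_phi, psi_phi] at h4

lemma ren_mon (i k : ℕ) : ren (X 0 ^ i * X 1 ^ k) = X 0 ^ i * X 1 ^ k := by
  simp [ren, Fin.castLE]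

lemma key (b q : ℤ) (i j e t m : ℕ) (hb : (m:ℤ) - e = b) (hq : (t:ℤ) + e - m = q) :
    mk5 (X 0 ^ i * X 1 ^ j * X 2 ^ e * X 3 ^ t * X 4 ^ m) ∈ Set.range (F11 b q) := by
  rcases le_or_gt 0 b with hb0 | hb0
  · obtain ⟨d, rfl⟩ : ∃ d, m = e + d := ⟨m - e, by omega⟩
    refine ⟨X 0 ^ i * X 1 ^ (j + 2*e), ?_⟩
    rw [F11_eq, ren_mon]
    have hbt : b.toNat = d := by omega
    have hqt : (q + b).toNat = t := by omega
    unfold G11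
    rw [if_pos hb0, hbt, hqt]
    have e1 : (X 0 ^ i * X 1 ^ j * X 2 ^ e * X 3 ^ t * X 4 ^ (e + d) : MvPolynomial (Fin 5) k2)
        = (X 2 * X 4) ^ e * (X 0 ^ i * X 1 ^ j * X 3 ^ t * X 4 ^ d) := by ring
    rw [e1, red]
    congr 1
    ring
  · obtain ⟨d, rfl⟩ : ∃ d, e = m + d := ⟨e - m, by omega⟩
    refine ⟨X 0 ^ i * X 1 ^ (j + 2*m), ?_⟩
    rw [F11_eq, ren_mon]
    have hbt : (-b).toNat = d := by omega
    have hqt : (q + b).toNat = t := by omega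
    unfold G11
    rw [if_neg (by omega), hbt, hqt]
    have e1 : (X 0 ^ i * X 1 ^ j * X 2 ^ (m + d) * X 3 ^ t * X 4 ^ m : MvPolynomial (Fin 5) k2)
        = (X 2 * X 4) ^ m * (X 0 ^ i * X 1 ^ j * X 2 ^ d * X 3 ^ t) := by ring
    rw [e1, red]
    congr 1
    ring

lemma g_mem (b q : ℤ) (h : 0 ≤ b + q) : g11 b q ∈ comp11 b q := by
  apply Submodule.subset_span
  by_cases hb : 0 ≤ b
  · exact ⟨0, 0, 0, (q+b).toNat, b.toNat, by omega, by omega,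
      by rw [g11, if_pos hb]; congr 1; ring⟩
  · exact ⟨0, 0, (-b).toNat, (q+b).toNat, 0, by omega, by omega,
      by rw [g11, if_neg hb]; congr 1; ring⟩

lemma mul_X_mem (b q : ℤ) (n : Fin 5) (hn : n = 0 ∨ n = 1) :
    ∀ x ∈ comp11 b q, x * mk5 (X n) ∈ comp11 b q := by
  intro x hx
  induction hx using Submodule.span_induction with
  | mem y hy =>
    obtain ⟨i, j, e, t, m, h1, h2, rfl⟩ := hy
    apply Submodule.subset_span
    rcases hn with rfl | rfl
    · exact ⟨i+1, j, e, t, m, h1, h2, by rw [← map_mul]; congr 1; ring⟩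
    · exact ⟨i, j+1, e, t, m, h1, h2, by rw [← map_mul]; congr 1; ring⟩
  | zero => rw [zero_mul]; exact (comp11 b q).zero_mem
  | add a b' _ _ ha hb => rw [add_mul]; exact (comp11 b q).add_mem ha hb
  | smul c a _ ha => rw [smul_mul_assoc]; exact (comp11 b q).smul_mem c ha

lemma F11_add (b q : ℤ) (p p' : MvPolynomial (Fin 2) k2) :
    F11 b q (p + p') = F11 b q p + F11 b q p' := by
  rw [F11_eq, F11_eq, F11_eq, map_add, add_mul, map_add]

lemma range_sub (b q : ℤ) (h : 0 ≤ b + q) (p : MvPolynomial (Fin 2) k2) :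
    F11 b q p ∈ comp11 b q := by
  induction p using MvPolynomial.induction_on with
  | C c =>
    have hc : c = 0 ∨ c = 1 := by
      fin_cases c
      · exact Or.inl rfl
      · exact Or.inr rfl
    rcases hc with rfl | rfl
    · rw [F11_eq, map_zero, map_zero, zero_mul, map_zero]
      exact (comp11 b q).zero_mem
    · have h1 : ren (1 : MvPolynomial (Fin 2) k2) = 1 := map_one ren
      rw [F11_eq, map_one, h1, one_mul, ← g11_eq]
      exact g_mem b q h
  | add p p' hp hp' => rw [F11_add]; exact (comp11 b q).add_mem hp hp'
  | mul_X p n hp =>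
    have : F11 b q (p * X n) = F11 b q p * mk5 (X (Fin.castLE (by norm_num) n)) := by
      have hren : ren (p * X n) = ren p * X (Fin.castLE (by norm_num) n) := by
        simp [ren]
      rw [F11_eq, F11_eq, hren]
      simp only [map_mul]
      ring
    rw [this]
    refine mul_X_mem b q _ ?_ _ hp
    fin_cases n
    · exact Or.inl rfl
    · exact Or.inr rfl

def M11 (b q : ℤ) : Submodule k2 S5 where
  carrier := Set.range (F11 b q)
  add_mem' := by
    rintro _ _ ⟨p, rfl⟩ ⟨p', rfl⟩
    exact ⟨p + p', F11_add b q p p'⟩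
  zero_mem' := ⟨0, by rw [F11_eq, map_zero, zero_mul, map_zero]⟩
  smul_mem' := by
    rintro c _ ⟨p, rfl⟩
    have hc : c = 0 ∨ c = 1 := by
      fin_cases c
      · exact Or.inl rfl
      · exact Or.inr rfl
    rcases hc with rfl | rfl
    · exact ⟨0, by rw [F11_eq, map_zero, zero_mul, map_zero, zero_smul]⟩
    · exact ⟨p, by rw [one_smul]⟩

lemma comp_sub (b q : ℤ) : comp11 b q ≤ M11 b q := by
  rw [comp11, Submodule.span_le]
  rintro x ⟨i, j, e, t, m, h1, h2, rfl⟩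
  exact key b q i j e t m h1 h2

lemma vanish (b q : ℤ) (h : b + q < 0) : comp11 b q = ⊥ := by
  rw [comp11, Submodule.span_eq_bot]
  rintro x ⟨i, j, e, t, m, h1, h2, rfl⟩
  exfalso; omega

end Aux

/-- for `b + q ≥ 0`, the weight-`(b,q)` component of `S` is a free
`ℤ/2[a,u]`-module of rank 1 on the stated generator, and it vanishes when `b + q < 0`. -/
theorem stmt11 (b q : ℤ) :
    (0 ≤ b + q →
      Function.Injective (F11 b q) ∧ Set.range (F11 b q) = ↑(comp11 b q)) ∧
    (b + q < 0 → comp11 b q = ⊥) := by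
  refine ⟨fun h => ⟨F11_inj b q, ?_⟩, vanish b q⟩
  apply Set.Subset.antisymm
  · rintro _ ⟨p, rfl⟩
    exact range_sub b q h p
  · exact comp_sub b q
end
end

section
/- Let N = ⊕_{i ≥ 1, j ≥ 1} B_i (a direct sum of copies of the modules B_i indexed by pairs (i,j) with i,j ≥ 1), viewed as a module over S = Z/2[a,u][ξ, τσ, μ]/(ξμ - u²) by: a, u act componentwise via the Z/2[a,u]-structure of B_i; μ maps the (i,j)-component into the (i+1,j)-component via the inclusion B_i ↪ B_{i+1}; ξ maps the (i,j)-component to the (i-1,j)-component via multiplication by u² (i.e. a^m v^n ↦ a^m v^{n-2}, zero if n < 2), and to 0 when i = 1; τσ maps the (i,j)-component to the (i,j-1)-component by the identity for j ≥ 2 and to 0 for j = 1. Then these formulas define a well-defined S-module structure on N; in particular ξ·(μ·x) = u²·x for all x ∈ N. -/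
noncomputable section

/-- The polynomial ring `ℤ/2[a,u]`, realized as `(ℤ/2[u])[a]`. -/
abbrev Rau : Type := Polynomial (Polynomial k2)

/-- The variable `a`. -/
def aR : Rau := Polynomial.X

/-- The variable `u`. -/
def uR : Rau := Polynomial.C Polynomial.X

/-- Given two commuting `ℤ/2`-linear endomorphisms `A`, `U` of `M`, the ring
homomorphism `ℤ/2[a,u] → End M` sending `a ↦ A`, `u ↦ U`. -/
def mkPhi {M : Type} [AddCommGroup M] [Module k2 M] (A U : Module.End k2 M)
    (hAU : Commute A U) : Rau →+* Module.End k2 M :=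
  Polynomial.eval₂RingHom'
    (Polynomial.eval₂RingHom' (algebraMap k2 (Module.End k2 M)) U fun c => Algebra.commutes c U)
    A (by
      intro p
      induction p using Polynomial.induction_on with
      | C c =>
          simpa [Polynomial.eval₂RingHom'] using Algebra.commute_algebraMap_left c A
      | add p q hp hq =>
          simpa [map_add] using hp.add_left hq
      | monomial n c h =>
          have hx : (Polynomial.eval₂RingHom' (algebraMap k2 (Module.End k2 M)) U
              fun c => Algebra.commutes c U) (Polynomial.C c * Polynomial.X ^ (n + 1)) =
              (Polynomial.eval₂RingHom' (algebraMap k2 (Module.End k2 M)) U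
              fun c => Algebra.commutes c U) (Polynomial.C c * Polynomial.X ^ n) * U := by
            rw [pow_succ, ← mul_assoc, map_mul]
            simp [Polynomial.eval₂RingHom']
          rw [hx]
          exact h.mul_left hAU.symm)

/-- The negative cone `NC`, with `ℤ/2`-basis `θ/(aᵐuⁿ)` indexed by `(m, n) ∈ ℕ × ℕ`. -/
abbrev NC : Type := (ℕ × ℕ) →₀ k2

/-- The basis element `θ/(aᵐuⁿ)` of `NC`. -/
def θ (m n : ℕ) : NC := Finsupp.single (m, n) 1

/-- The action of `a` on `NC`: lower `m`, killing `m = 0`. -/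
def Aop : Module.End k2 NC :=
  Finsupp.lsum k2 fun p => if p.1 = 0 then 0 else Finsupp.lsingle (p.1 - 1, p.2)

/-- The action of `u` on `NC`: lower `n`, killing `n = 0`. -/
def Uop : Module.End k2 NC :=
  Finsupp.lsum k2 fun p => if p.2 = 0 then 0 else Finsupp.lsingle (p.1, p.2 - 1)

lemma comm_AU : Commute Aop Uop := by
  rw [Commute, SemiconjBy]
  refine Finsupp.lhom_ext fun p c => ?_
  obtain ⟨m, n⟩ := p
  rcases m with _ | m <;> rcases n with _ | n <;>
    simp [Module.End.mul_apply, Aop, Uop, Finsupp.lsum_single]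

/-- The `ℤ/2[a,u]`-module structure on the negative cone. -/
instance : Module Rau NC := Module.compHom NC (mkPhi Aop Uop comm_AU)

/-- The module `B_i = ℤ/2[a,a⁻¹,v]/(v^{2i})`, with `ℤ/2`-basis `aᵐvⁿ`
indexed by pairs `(m, n) ∈ ℤ × ℕ` with `n < 2i`. -/
abbrev Bm (i : ℕ) : Type := {p : ℤ × ℕ // p.2 < 2 * i} →₀ k2

/-- The action of `a` on `B_i`: multiplication by `a`, i.e. `aᵐvⁿ ↦ aᵐ⁺¹vⁿ`. -/
def AopB (i : ℕ) : Module.End k2 (Bm i) :=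
  Finsupp.lsum k2 fun p => Finsupp.lsingle ⟨(p.1.1 + 1, p.1.2), p.2⟩

/-- The action of `u` on `B_i`: division by `v`, i.e. `aᵐvⁿ ↦ aᵐvⁿ⁻¹` for `n ≥ 1`
and `aᵐv⁰ ↦ 0`. -/
def UopB (i : ℕ) : Module.End k2 (Bm i) :=
  Finsupp.lsum k2 fun p =>
    if p.1.2 = 0 then 0
    else Finsupp.lsingle ⟨(p.1.1, p.1.2 - 1), lt_of_le_of_lt (Nat.sub_le _ _) p.2⟩

lemma comm_AUB (i : ℕ) : Commute (AopB i) (UopB i) := by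
  rw [Commute, SemiconjBy]
  refine Finsupp.lhom_ext fun p c => ?_
  obtain ⟨⟨m, n⟩, hn⟩ := p
  rcases n with _ | n <;>
    simp [Module.End.mul_apply, AopB, UopB, Finsupp.lsum_single]

/-- The `ℤ/2[a,u]`-module structure on `B_i`. -/
instance (i : ℕ) : Module Rau (Bm i) :=
  Module.compHom (Bm i) (mkPhi (AopB i) (UopB i) (comm_AUB i))

/-- The inclusion `B_i ↪ B_{i+1}`, `aᵐvⁿ ↦ aᵐvⁿ`. -/
def ιB (i : ℕ) : Bm i →ₗ[k2] Bm (i + 1) :=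
  Finsupp.lmapDomain k2 k2 fun p => ⟨p.1, lt_of_lt_of_le p.2 (by omega)⟩

/-- The map `φ = (·u²) : B_{i+1} → B_i`, `aᵐvⁿ ↦ aᵐvⁿ⁻²` for `n ≥ 2` and `0` for `n ∈ {0,1}`. -/
def φB (i : ℕ) : Bm (i + 1) →ₗ[k2] Bm i :=
  Finsupp.lsum k2 fun p =>
    if h : 2 ≤ p.1.2 then
      Finsupp.lsingle ⟨(p.1.1, p.1.2 - 2), by have := p.2; omega⟩
    else 0

/-- The natural quotient map `B_{i+1} → B_i`, killing `aᵐvⁿ` for `n ≥ 2i`. -/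
def qB (i : ℕ) : Bm (i + 1) →ₗ[k2] Bm i :=
  Finsupp.lsum k2 fun p => if h : p.1.2 < 2 * i then Finsupp.lsingle ⟨p.1, h⟩ else 0

/-- The direct sum `N = ⊕_{i,j ≥ 1} B_i{μⁱ/τσʲ}`: the component indexed by
`p = (p₁, p₂)` is `B_{p₁}` placed at `(i, j) = (p₁, p₂ + 1)` (the components with
`p₁ = 0` are the zero module, since `B_0 = 0`). -/
abbrev Nbig : Type := DirectSum (ℕ × ℕ) fun p => Bm p.1

/-- `a` acting componentwise on `N`. -/
def aopN : Module.End k2 Nbig :=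
  DirectSum.toModule k2 (ℕ × ℕ) Nbig fun p =>
    (DirectSum.lof k2 (ℕ × ℕ) (fun q => Bm q.1) p).comp (AopB p.1)

/-- `u` acting componentwise on `N`. -/
def uopN : Module.End k2 Nbig :=
  DirectSum.toModule k2 (ℕ × ℕ) Nbig fun p =>
    (DirectSum.lof k2 (ℕ × ℕ) (fun q => Bm q.1) p).comp (UopB p.1)

/-- `μ` acting on `N`: the `(i,j)`-component maps into the `(i+1,j)`-component
via the inclusion `B_i ↪ B_{i+1}`. -/
def μopN : Module.End k2 Nbig :=
  DirectSum.toModule k2 (ℕ × ℕ) Nbig fun p =>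
    (DirectSum.lof k2 (ℕ × ℕ) (fun q => Bm q.1) (p.1 + 1, p.2)).comp (ιB p.1)

/-- The `ξ`-action on the component `B_{p₁}`: zero on `i = p₁ ≤ 1` (where either the
component is zero or `ξ` maps it to zero), and multiplication by `u²`
landing in the `(i-1,j)`-component otherwise. -/
def ξcomp : ∀ p : ℕ × ℕ, Bm p.1 →ₗ[k2] Nbig
  | (0, _) => 0
  | (i + 1, j) => (DirectSum.lof k2 (ℕ × ℕ) (fun q => Bm q.1) (i, j)).comp (φB i)

/-- `ξ` acting on `N`. -/
def ξopN : Module.End k2 Nbig :=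
  DirectSum.toModule k2 (ℕ × ℕ) Nbig ξcomp

/-- The `τσ`-action on the component `B_{p₁}` at `(i,j) = (p₁, p₂+1)`: zero for
`j = 1` (i.e. `p₂ = 0`) and the identity into the `(i, j-1)`-component otherwise. -/
def τcomp : ∀ p : ℕ × ℕ, Bm p.1 →ₗ[k2] Nbig
  | (_, 0) => 0
  | (i, j + 1) => DirectSum.lof k2 (ℕ × ℕ) (fun q => Bm q.1) (i, j)

/-- `τσ` acting on `N`. -/
def τopN : Module.End k2 Nbig :=
  DirectSum.toModule k2 (ℕ × ℕ) Nbig τcomp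

/-! The five operators commute pairwise: `a` and `u` act componentwise and commute with the
inclusions `ι` and the maps `φ`, and `τσ` only moves the index `j`. Hence they generate a
commutative subalgebra of `End(N)`, and evaluating `ℤ/2[a,u,ξ,τσ,μ]` there gives a ring map.
It kills `ξμ - u²` because on each `B_i` both `φ ∘ ι` and `ι ∘ φ` are `u²`; the latter also
gives `μξ = u² = ξμ`. -/

open scoped IsMulCommutative in
theorem MvPolynomial.exists_aeval_of_commute {R A σ : Type*} [CommSemiring R] [Semiring A]
    [Algebra R A] (f : σ → A) (hf : ∀ i j, Commute (f i) (f j)) :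
    ∃ Φ : MvPolynomial σ R →ₐ[R] A, ∀ i, Φ (X i) = f i := by
  have := Algebra.isMulCommutative_adjoin R (s := Set.range f) <| by
    rintro _ ⟨i, rfl⟩ _ ⟨j, rfl⟩
    exact hf i j
  exact ⟨(Algebra.adjoin R (Set.range f)).val.comp
    (aeval fun i => ⟨f i, Algebra.subset_adjoin ⟨i, rfl⟩⟩), fun i => by simp⟩

section Components

variable {i : ℕ} {m : ℤ} {n : ℕ} (c : k2)

lemma AopB_single (h : n < 2 * i) :
    AopB i (Finsupp.single ⟨(m, n), h⟩ c) = Finsupp.single ⟨(m + 1, n), h⟩ c := by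
  simp [AopB]

lemma UopB_single_zero (h : 0 < 2 * i) : UopB i (Finsupp.single ⟨(m, 0), h⟩ c) = 0 := by
  simp [UopB]

lemma UopB_single_succ (h : n + 1 < 2 * i) :
    UopB i (Finsupp.single ⟨(m, n + 1), h⟩ c) = Finsupp.single ⟨(m, n), by omega⟩ c := by
  simp [UopB]

lemma ιB_single (h : n < 2 * i) :
    ιB i (Finsupp.single ⟨(m, n), h⟩ c) = Finsupp.single ⟨(m, n), by omega⟩ c := by
  simp [ιB]

lemma φB_single_of_lt (h : n < 2 * (i + 1)) (hn : n < 2) :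
    φB i (Finsupp.single ⟨(m, n), h⟩ c) = 0 := by
  simp [φB, Nat.not_le.mpr hn]

lemma φB_single_add_two (h : n + 2 < 2 * (i + 1)) :
    φB i (Finsupp.single ⟨(m, n + 2), h⟩ c) = Finsupp.single ⟨(m, n), by omega⟩ c := by
  simp [φB]

end Components

section ComponentIdentities

variable (i : ℕ)

lemma ιB_comp_AopB : ιB i ∘ₗ AopB i = AopB (i + 1) ∘ₗ ιB i :=
  Finsupp.lhom_ext fun ⟨⟨m, n⟩, h⟩ c => by simp [AopB_single, ιB_single]

lemma ιB_comp_UopB : ιB i ∘ₗ UopB i = UopB (i + 1) ∘ₗ ιB i :=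
  Finsupp.lhom_ext fun ⟨⟨m, n⟩, h⟩ c => by
    rcases n with _ | n <;> simp [UopB_single_zero, UopB_single_succ, ιB_single]

lemma φB_comp_AopB : φB i ∘ₗ AopB (i + 1) = AopB i ∘ₗ φB i :=
  Finsupp.lhom_ext fun ⟨⟨m, n⟩, h⟩ c => by
    rcases n with _ | _ | n <;> simp [AopB_single, φB_single_of_lt, φB_single_add_two]

lemma φB_comp_UopB : φB i ∘ₗ UopB (i + 1) = UopB i ∘ₗ φB i :=
  Finsupp.lhom_ext fun ⟨⟨m, n⟩, h⟩ c => by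
    rcases n with _ | _ | _ | n <;>
      simp [UopB_single_zero, UopB_single_succ, φB_single_of_lt, φB_single_add_two]

lemma φB_comp_ιB : φB i ∘ₗ ιB i = UopB i ∘ₗ UopB i :=
  Finsupp.lhom_ext fun ⟨⟨m, n⟩, h⟩ c => by
    rcases n with _ | _ | n <;>
      simp [UopB_single_zero, UopB_single_succ, ιB_single, φB_single_of_lt, φB_single_add_two]

lemma ιB_comp_φB : ιB i ∘ₗ φB i = UopB (i + 1) ∘ₗ UopB (i + 1) :=
  Finsupp.lhom_ext fun ⟨⟨m, n⟩, h⟩ c => by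
    rcases n with _ | _ | n <;>
      simp [UopB_single_zero, UopB_single_succ, ιB_single, φB_single_of_lt, φB_single_add_two]

end ComponentIdentities

local notation "lofN" => DirectSum.lof k2 (ℕ × ℕ) (fun q : ℕ × ℕ => Bm (Prod.fst q))

lemma endN_ext {F G : Module.End k2 Nbig}
    (h : ∀ i j (x : Bm (i + 1)), F (lofN (i + 1, j) x) = G (lofN (i + 1, j) x)) : F = G := by
  refine DirectSum.linearMap_ext k2 fun ⟨i, j⟩ => LinearMap.ext fun x => ?_
  rcases i with _ | i
  · obtain rfl : x = 0 := Finsupp.ext fun q => absurd q.2 (by omega)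
    simp
  · exact h i j x

def diagN (F : ∀ i, Module.End k2 (Bm i)) : Module.End k2 Nbig :=
  DirectSum.toModule k2 (ℕ × ℕ) Nbig fun p => (lofN p).comp (F p.1)

section Operators

variable (F G : ∀ i, Module.End k2 (Bm i)) (i j : ℕ)

lemma diagN_lof (p : ℕ × ℕ) (x : Bm p.1) : diagN F (lofN p x) = lofN p (F p.1 x) := by
  simp [diagN]

lemma μopN_lof (x : Bm i) : μopN (lofN (i, j) x) = lofN (i + 1, j) (ιB i x) := by
  simp [μopN]

lemma ξopN_lof (x : Bm (i + 1)) : ξopN (lofN (i + 1, j) x) = lofN (i, j) (φB i x) := by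
  simp [ξopN, ξcomp]

lemma τopN_lof_zero (x : Bm i) : τopN (lofN (i, 0) x) = 0 := by
  simp [τopN, τcomp]

lemma τopN_lof_succ (x : Bm i) : τopN (lofN (i, j + 1) x) = lofN (i, j) x := by
  simp [τopN, τcomp]

lemma commute_diagN (h : ∀ i, Commute (F i) (G i)) : Commute (diagN F) (diagN G) := by
  refine endN_ext fun i j x => ?_
  simp only [Module.End.mul_apply, diagN_lof]
  exact congrArg _ (LinearMap.congr_fun (h (i + 1)).eq x)

lemma commute_diagN_μopN (h : ∀ i, ιB i ∘ₗ F i = F (i + 1) ∘ₗ ιB i) :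
    Commute (diagN F) μopN := by
  refine endN_ext fun i j x => ?_
  simp only [Module.End.mul_apply, diagN_lof, μopN_lof]
  exact congrArg _ (LinearMap.congr_fun (h (i + 1)) x).symm

lemma commute_diagN_ξopN (h : ∀ i, φB i ∘ₗ F (i + 1) = F i ∘ₗ φB i) :
    Commute (diagN F) ξopN := by
  refine endN_ext fun i j x => ?_
  simp only [Module.End.mul_apply, diagN_lof, ξopN_lof]
  exact congrArg _ (LinearMap.congr_fun (h i) x).symm

lemma commute_diagN_τopN : Commute (diagN F) τopN := by
  refine endN_ext fun i j x => ?_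
  rcases j with _ | j <;> simp [Module.End.mul_apply, diagN_lof, τopN_lof_zero, τopN_lof_succ]

end Operators

lemma uopN_eq_diagN : uopN = diagN UopB := rfl

lemma ξopN_mul_μopN : ξopN * μopN = uopN * uopN := by
  refine endN_ext fun i j x => ?_
  simp only [Module.End.mul_apply, uopN_eq_diagN, diagN_lof, μopN_lof, ξopN_lof]
  exact congrArg _ (LinearMap.congr_fun (φB_comp_ιB (i + 1)) x)

lemma μopN_mul_ξopN : μopN * ξopN = uopN * uopN := by
  refine endN_ext fun i j x => ?_
  simp only [Module.End.mul_apply, uopN_eq_diagN, diagN_lof, μopN_lof, ξopN_lof]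
  exact congrArg _ (LinearMap.congr_fun (ιB_comp_φB i) x)

lemma commute_ξopN_τopN : Commute ξopN τopN := by
  refine endN_ext fun i j x => ?_
  rcases j with _ | j <;>
    simp [Module.End.mul_apply, ξopN_lof, τopN_lof_zero, τopN_lof_succ]

lemma commute_τopN_μopN : Commute τopN μopN := by
  refine endN_ext fun i j x => ?_
  rcases j with _ | j <;>
    simp [Module.End.mul_apply, μopN_lof, τopN_lof_zero, τopN_lof_succ]

lemma commute_generators : ∀ s t : Fin 5,
    Commute (![aopN, uopN, ξopN, τopN, μopN] s) (![aopN, uopN, ξopN, τopN, μopN] t) := by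
  have hau : Commute aopN uopN := commute_diagN _ _ comm_AUB
  have haξ : Commute aopN ξopN := commute_diagN_ξopN _ φB_comp_AopB
  have haτ : Commute aopN τopN := commute_diagN_τopN _
  have haμ : Commute aopN μopN := commute_diagN_μopN _ ιB_comp_AopB
  have huξ : Commute uopN ξopN := commute_diagN_ξopN _ φB_comp_UopB
  have huτ : Commute uopN τopN := commute_diagN_τopN _
  have huμ : Commute uopN μopN := commute_diagN_μopN _ ιB_comp_UopB
  have hξμ : Commute ξopN μopN := ξopN_mul_μopN.trans μopN_mul_ξopN.symm
  have hξτ := commute_ξopN_τopN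
  have hτμ := commute_τopN_μopN
  intro s t
  fin_cases s <;> fin_cases t <;> dsimp <;> with_reducible
    first | exact Commute.refl _ | assumption | exact Commute.symm (by assumption)

-- Instance search finds this on its own, but not as a subgoal of `Ring (Module.End k2 Nbig)`,
-- which the subtraction in `ξμ - u²` needs.
instance : AddCommGroup Nbig := inferInstance

open MvPolynomial in
/-- the described formulas for the actions of `a`, `u`, `ξ`, `τσ`, `μ`
define a well-defined `S`-module structure on `N = ⊕_{i,j≥1} B_i{μⁱ/τσʲ}` (i.e. a ring
homomorphism `S → End_{ℤ/2}(N)` with the prescribed values on the generators); in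
particular `ξ·(μ·x) = u²·x` for all `x ∈ N`. -/
theorem stmt16 :
    (∃ Θ : S5 →+* Module.End k2 Nbig,
      Θ (mk5 (X 0)) = aopN ∧ Θ (mk5 (X 1)) = uopN ∧ Θ (mk5 (X 2)) = ξopN ∧
      Θ (mk5 (X 3)) = τopN ∧ Θ (mk5 (X 4)) = μopN) ∧
    ∀ x : Nbig, ξopN (μopN x) = uopN (uopN x) := by
  obtain ⟨Θ₀, hΘ₀⟩ := exists_aeval_of_commute (R := k2) _ commute_generators
  have hrel : Θ₀ (X 2 * X 4 - X 1 ^ 2) = 0 := by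
    rw [map_sub, map_mul, map_pow, hΘ₀, hΘ₀, hΘ₀]
    exact sub_eq_zero.2 (ξopN_mul_μopN.trans (sq uopN).symm)
  have hker : I5 ≤ RingHom.ker Θ₀ := (Ideal.span_singleton_le_iff_mem _).2 hrel
  let Θ : S5 →+* Module.End k2 Nbig := Ideal.Quotient.lift I5 Θ₀ fun f hf => hker hf
  have hΘ (s : Fin 5) : Θ (mk5 (X s)) = ![aopN, uopN, ξopN, τopN, μopN] s :=
    (Ideal.Quotient.lift_mk _ _ _).trans (hΘ₀ s)
  exact ⟨⟨Θ, hΘ 0, hΘ 1, hΘ 2, hΘ 3, hΘ 4⟩, fun x => LinearMap.congr_fun ξopN_mul_μopN x⟩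
end
end
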